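/- Let X ∈ ℝ^{n₁×r} have i.i.d. N(0,1) entries with r > n₁, and let S ∈ ℝ^{r×r} be a fixed positive-definite diagonal matrix. Then almost surely tr((XS²Xᵀ)^{-1} X S⁴ Xᵀ (XS²Xᵀ)^{-1}) ≥ tr((XXᵀ)^{-1}). In particular, E of the left side is at least E tr((XXᵀ)^{-1}). -/

import Mathlib

/-!
The inequality holds for every matrix `M`, so both the almost-sure and the expected version are
immediate. Put `C = MMᵀ`, `A = MS²Mᵀ`, `B = MS⁴Mᵀ`. The Gram matrix of the rows of `M` and `MS²`
is the block matrix `[[C, A], [A, B]] ⪰ 0`, so its Schur complement `B - AC⁻¹A` is `⪰ 0`;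
conjugating by `A⁻¹` gives `A⁻¹BA⁻¹ ⪰ C⁻¹`, and the trace is monotone. If the rows of `M` are
dependent, `C` and `A` are both singular and Mathlib's `⁻¹` makes both sides `0`.
-/

open Matrix MeasureTheory ProbabilityTheory

namespace Matrix

variable {m n 𝕜 : Type*} [Fintype m] [Fintype n] [DecidableEq m]
  [Field 𝕜] [PartialOrder 𝕜] [StarRing 𝕜]

theorem isUnit_mul_mul_conjTranspose_iff {D : Matrix n n 𝕜} (hD : D.PosDef) {M : Matrix m n 𝕜} :
    IsUnit (M * D * Mᴴ) ↔ Function.Injective M.vecMul := by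
  refine ⟨fun h => ?_, fun h => (hD.mul_mul_conjTranspose_same h).isUnit⟩
  have hinj := vecMul_injective_iff_isUnit.mpr h
  simp only [← vecMul_vecMul] at hinj
  exact (hinj.of_comp (f := fun w => w ᵥ* Mᴴ)).of_comp (f := fun w => w ᵥ* D)

variable [StarOrderedRing 𝕜]

theorem posSemidef_inv_mul_mul_inv_sub_inv {M : Matrix m n 𝕜} {D : Matrix n n 𝕜}
    (hD : D.IsHermitian) (hC : (M * Mᴴ).PosDef) (hA : IsUnit (M * D * Mᴴ)) :
    ((M * D * Mᴴ)⁻¹ * (M * (D * D) * Mᴴ) * (M * D * Mᴴ)⁻¹ - (M * Mᴴ)⁻¹).PosSemidef := by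
  set A := M * D * Mᴴ
  have hAh : Aᴴ = A := by simp [A, hD.eq, Matrix.mul_assoc]
  have gram : fromBlocks (M * Mᴴ) A Aᴴ (M * (D * D) * Mᴴ) =
      fromRows M (M * D) * (fromRows M (M * D))ᴴ := by
    rw [conjTranspose_fromRows_eq_fromCols_conjTranspose, fromRows_mul_fromCols, hAh]
    simp [A, hD.eq, Matrix.mul_assoc]
  let _ := hC.isUnit.invertible
  have schur : (M * (D * D) * Mᴴ - Aᴴ * (M * Mᴴ)⁻¹ * A).PosSemidef :=
    (hC.fromBlocks₁₁ A _).mp (gram ▸ posSemidef_self_mul_conjTranspose _)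
  have hA' : IsUnit A.det := (isUnit_iff_isUnit_det A).mp hA
  convert schur.mul_mul_conjTranspose_same A⁻¹ using 1
  rw [conjTranspose_nonsing_inv, hAh, Matrix.mul_sub, Matrix.sub_mul]
  congr 1
  simp only [← Matrix.mul_assoc, nonsing_inv_mul _ hA', Matrix.one_mul]
  simp only [Matrix.mul_assoc, mul_nonsing_inv _ hA', Matrix.mul_one]

theorem trace_inv_mul_conjTranspose_le [DecidableEq n] {D : Matrix n n 𝕜} (hD : D.PosDef)
    (M : Matrix m n 𝕜) :
    trace ((M * Mᴴ)⁻¹) ≤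
      trace ((M * D * Mᴴ)⁻¹ * (M * (D * D) * Mᴴ) * (M * D * Mᴴ)⁻¹) := by
  by_cases h : Function.Injective M.vecMul
  · have hC := PosDef.mul_conjTranspose_self M h
    have hA := (isUnit_mul_mul_conjTranspose_iff hD).mpr h
    have := (posSemidef_inv_mul_mul_inv_sub_inv hD.isHermitian hC hA).trace_nonneg
    rwa [trace_sub, sub_nonneg] at this
  · have hC : ¬IsUnit (M * (1 : Matrix n n 𝕜) * Mᴴ) :=
      (isUnit_mul_mul_conjTranspose_iff .one).not.mpr h
    have hA := (isUnit_mul_mul_conjTranspose_iff hD).not.mpr h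
    rw [Matrix.mul_one, isUnit_iff_isUnit_det] at hC
    rw [isUnit_iff_isUnit_det] at hA
    simp [nonsing_inv_apply_not_isUnit _ hC, nonsing_inv_apply_not_isUnit _ hA]

end Matrix

theorem stmt12_general {Ω : Type*} [MeasurableSpace Ω] (μ : Measure Ω)
    {n₁ r : ℕ} (X : Ω → Fin n₁ → Fin r → ℝ)
    (S : Fin r → ℝ) (hS : ∀ k, 0 < S k)
    (f g : Matrix (Fin n₁) (Fin r) ℝ → ℝ)
    (hf : ∀ M, f M = Matrix.trace
      ((M * Matrix.diagonal (fun k => S k ^ 2) * Mᵀ)⁻¹ *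
        (M * Matrix.diagonal (fun k => S k ^ 4) * Mᵀ) *
        (M * Matrix.diagonal (fun k => S k ^ 2) * Mᵀ)⁻¹))
    (hg : ∀ M, g M = Matrix.trace ((M * Mᵀ)⁻¹)) :
    (∀ᵐ ω ∂μ, g (Matrix.of (X ω)) ≤ f (Matrix.of (X ω))) ∧
    (∫⁻ ω, ENNReal.ofReal (g (Matrix.of (X ω))) ∂μ ≤
      ∫⁻ ω, ENNReal.ofReal (f (Matrix.of (X ω))) ∂μ) := by
  have hD : (diagonal fun k => S k ^ 2).PosDef :=
    posDef_diagonal_iff.mpr fun k => pow_pos (hS k) 2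
  have hDD : diagonal (fun k => S k ^ 2) * diagonal (fun k => S k ^ 2) =
      diagonal fun k => S k ^ 4 := by
    rw [diagonal_mul_diagonal]
    ring_nf
  have hgf : ∀ M, g M ≤ f M := fun M => by
    simpa only [hf, hg, hDD, conjTranspose_eq_transpose_of_trivial] using
      trace_inv_mul_conjTranspose_le hD M
  exact ⟨.of_forall fun ω => hgf _, lintegral_mono fun ω => ENNReal.ofReal_le_ofReal (hgf _)⟩

/-- With `X` an `n₁ × r` i.i.d. Gaussian matrix (`r > n₁`) and `S` a fixed positive
diagonal matrix, almost surely
`tr((XS²Xᵀ)⁻¹ XS⁴Xᵀ (XS²Xᵀ)⁻¹) ≥ tr((XXᵀ)⁻¹)`, hence the same holds in expectation. -/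
theorem stmt12 {Ω : Type*} [MeasurableSpace Ω] (μ : Measure Ω) [IsProbabilityMeasure μ]
    {n₁ r : ℕ} (hr : n₁ < r) (X : Ω → Fin n₁ → Fin r → ℝ)
    (hX : Measure.map X μ =
      Measure.pi fun _ : Fin n₁ => Measure.pi fun _ : Fin r => gaussianReal 0 1)
    (S : Fin r → ℝ) (hS : ∀ k, 0 < S k)
    (f g : Matrix (Fin n₁) (Fin r) ℝ → ℝ)
    (hf : ∀ M, f M = Matrix.trace
      ((M * Matrix.diagonal (fun k => S k ^ 2) * Mᵀ)⁻¹ *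
        (M * Matrix.diagonal (fun k => S k ^ 4) * Mᵀ) *
        (M * Matrix.diagonal (fun k => S k ^ 2) * Mᵀ)⁻¹))
    (hg : ∀ M, g M = Matrix.trace ((M * Mᵀ)⁻¹)) :
    (∀ᵐ ω ∂μ, g (Matrix.of (X ω)) ≤ f (Matrix.of (X ω))) ∧
    (∫⁻ ω, ENNReal.ofReal (g (Matrix.of (X ω))) ∂μ ≤
      ∫⁻ ω, ENNReal.ofReal (f (Matrix.of (X ω))) ∂μ) :=
  stmt12_general μ X S hS f g hf hg
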